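/- Let s be an even positive integer. For every nonnegative integer n, bc_s(n) = Σ_{i≥0} dd_s(2n − i²·s), where the sum ranges over all integers i ≥ 0 with i²·s ≤ 2n. -/

import Mathlib

/-- A strict partition, encoded as a strictly decreasing list of positive integers. -/
def IsStrictPartition (l : List ℕ) : Prop :=
  List.Pairwise (· > ·) l ∧ ∀ x ∈ l, 0 < x

/-- The set of bar lengths in the (0-indexed) `i`-th row of a strict partition `l`:
`{λᵢ + λⱼ : i < j ≤ ℓ} ∪ ({1,…,λᵢ} \ {λᵢ − λⱼ : i < j ≤ ℓ})`. -/
def barLengths (l : List ℕ) (i : ℕ) : Finset ℕ :=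
  ((Finset.Ioo i l.length).image fun j => l.getD i 0 + l.getD j 0) ∪
    (Finset.Icc 1 (l.getD i 0) \
      ((Finset.Ioo i l.length).image fun j => l.getD i 0 - l.getD j 0))

/-- `l` is an `s`-bar-core: `s` is not a bar length in any row. -/
def IsBarCore (l : List ℕ) (s : ℕ) : Prop :=
  ∀ i, i < l.length → s ∉ barLengths l i

/-- The shifted hook length of the box in row `i`, column `c` (both 0-indexed, where the
`i`-th row of the shifted Young diagram occupies columns `i, …, λᵢ + i − 1`): the number of
boxes to its right in row `i` together with itself, plus the number of boxes below it in
column `c`, plus the number of boxes of row `c + 1` if that row exists. -/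
def shiftedHook (l : List ℕ) (i c : ℕ) : ℕ :=
  (l.getD i 0 + i - c) +
    ((Finset.Ioc i c).filter fun i' => c < l.getD i' 0 + i').card +
    l.getD (c + 1) 0

/-- `l` is an `s`-CSYD: no shifted hook length of the shifted Young diagram `S(λ)`
is divisible by `s`. -/
def IsCSYD (l : List ℕ) (s : ℕ) : Prop :=
  ∀ i c, i < l.length → i ≤ c → c < l.getD i 0 + i → ¬ s ∣ shiftedHook l i c

/-- The `i`-th part (0-indexed) of the doubled distinct partition `λλ`, read off from the
Frobenius symbol `(λ₁,…,λ_ℓ ; λ₁−1,…,λ_ℓ−1)`: for `i < ℓ` the part is `λᵢ + i + 1`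
(1-indexed: `λᵢ + i`), and for `ℓ ≤ i` the part is determined by the column lengths
`λⱼ + j − 1` (1-indexed). -/
def ddPart (l : List ℕ) (i : ℕ) : ℕ :=
  if i < l.length then l.getD i 0 + i + 1
  else ((Finset.range l.length).filter fun j => i + 1 ≤ l.getD j 0 + j).card

/-- The doubled distinct partition `λλ` of a strict partition `l`, as a list of parts. -/
def doubledDistinct (l : List ℕ) : List ℕ :=
  (List.range (l.getD 0 0)).map (ddPart l)

/-- Ordinary hook length of the box in row `i`, column `j` (0-indexed) of a partition `m`. -/
def hookLen (m : List ℕ) (i j : ℕ) : ℕ :=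
  (m.getD i 0 - j) + ((Finset.Ioo i m.length).filter fun i' => j < m.getD i' 0).card

/-- `m` is an `s`-core: no hook length is divisible by `s`. -/
def IsCore (m : List ℕ) (s : ℕ) : Prop :=
  ∀ i j, i < m.length → j < m.getD i 0 → ¬ s ∣ hookLen m i j

/-- NE lattice paths from `(0,0)` to `(a,b)`, encoded as lists of steps where
`false` is an east step `E = (1,0)` and `true` is a north step `N = (0,1)`. -/
def NEPaths (a b : ℕ) : Set (List Bool) :=
  {w | w.count false = a ∧ w.count true = b}

/-- A step of a free Motzkin path. -/
inductive MStep : Type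
  | U : MStep
  | F : MStep
  | D : MStep
deriving DecidableEq

/-- The height change of a step: `U = (1,1)`, `F = (1,0)`, `D = (1,−1)`. -/
def MStep.ht : MStep → ℤ
  | .U => 1
  | .F => 0
  | .D => -1

/-- Free Motzkin paths of type `(p,q)`: lattice paths from `(0,0)` to `(p,q)` with steps
`U = (1,1)`, `F = (1,0)` and `D = (1,−1)`, encoded as lists of steps. -/
def FreeMotzkin (p : ℕ) (q : ℤ) : Set (List MStep) :=
  {w | w.length = p ∧ (w.map MStep.ht).sum = q}

/-- `multinom n a b c = n! / (a! · b! · c!)`. -/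
def multinom (n a b c : ℕ) : ℕ :=
  n.factorial / (a.factorial * b.factorial * c.factorial)

namespace BCaux

/-! ### Basic lemmas on strictly decreasing lists -/

lemma getD_eq_get {l : List ℕ} {i : ℕ} (h : i < l.length) : l.getD i 0 = l.get ⟨i, h⟩ := by
  simp [List.getD_eq_getElem?_getD, List.getElem?_eq_getElem h]

lemma sp_getD_lt {l : List ℕ} (hl : List.Pairwise (· > ·) l) {i j : ℕ}
    (hij : i < j) (hj : j < l.length) : l.getD j 0 < l.getD i 0 := by
  rw [getD_eq_get hj, getD_eq_get (lt_trans hij hj)]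
  exact hl.rel_get_of_lt (by simpa using hij)

lemma sp_getD_le {l : List ℕ} (hl : List.Pairwise (· > ·) l) {i j : ℕ}
    (hij : i ≤ j) (hj : j < l.length) : l.getD j 0 ≤ l.getD i 0 := by
  rcases eq_or_lt_of_le hij with rfl | h
  · exact le_rfl
  · exact (sp_getD_lt hl h hj).le

lemma sp_gap {l : List ℕ} (hl : List.Pairwise (· > ·) l) {i j : ℕ}
    (hij : i ≤ j) (hj : j < l.length) : l.getD j 0 + (j - i) ≤ l.getD i 0 := by
  obtain ⟨d, rfl⟩ := Nat.exists_eq_add_of_le hij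
  induction d with
  | zero => simp
  | succ d ih =>
    have h1 : i + d < l.length := by omega
    have h2 := ih (by omega) h1
    have h3 : l.getD (i + (d+1)) 0 < l.getD (i+d) 0 :=
      sp_getD_lt hl (by omega) hj
    omega

lemma mem_iff_getD {l : List ℕ} (hx : ∀ x ∈ l, 0 < x) {x : ℕ} :
    x ∈ l ↔ ∃ i, i < l.length ∧ l.getD i 0 = x := by
  constructor
  · intro h
    obtain ⟨i, hi, rfl⟩ := List.mem_iff_get.mp h
    exact ⟨i, i.2, by rw [getD_eq_get i.2]⟩
  · rintro ⟨i, hi, rfl⟩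
    rw [getD_eq_get hi]
    exact List.get_mem _ _

lemma getD_mem {l : List ℕ} {i : ℕ} (hi : i < l.length) : l.getD i 0 ∈ l := by
  rw [getD_eq_get hi]; exact List.get_mem _ _

lemma sp_getD_pos {l : List ℕ} (hx : ∀ x ∈ l, 0 < x) {i : ℕ} (hi : i < l.length) :
    0 < l.getD i 0 := hx _ (getD_mem hi)

/-- the elements strictly after index `i` are exactly the members smaller than `l.getD i 0`. -/
lemma smaller_parts {l : List ℕ} (hl : List.Pairwise (· > ·) l) (hx : ∀ x ∈ l, 0 < x)
    {i : ℕ} (hi : i < l.length) {y : ℕ} :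
    (∃ j, i < j ∧ j < l.length ∧ l.getD j 0 = y) ↔ (y ∈ l ∧ y < l.getD i 0) := by
  constructor
  · rintro ⟨j, hij, hj, rfl⟩
    exact ⟨getD_mem hj, sp_getD_lt hl hij hj⟩
  · rintro ⟨hy, hlt⟩
    obtain ⟨j, hj, rfl⟩ := (mem_iff_getD hx).mp hy
    refine ⟨j, ?_, hj, rfl⟩
    by_contra h
    exact absurd (sp_getD_le hl (i := j) (j := i) (by omega) hi) (by omega)

/-- maximality of the head -/
lemma le_head {l : List ℕ} (hl : List.Pairwise (· > ·) l) {x : ℕ} (hx : x ∈ l) :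
    x ≤ l.getD 0 0 := by
  obtain ⟨i, hi, rfl⟩ := List.mem_iff_get.mp hx
  rw [← getD_eq_get i.2]
  exact sp_getD_le hl (Nat.zero_le _) i.2

lemma len_le_head {l : List ℕ} (hl : List.Pairwise (· > ·) l) (hx : ∀ x ∈ l, 0 < x)
    (hne : l ≠ []) : l.length ≤ l.getD 0 0 := by
  have h1 : 0 < l.length := List.length_pos_iff.mpr hne
  have := sp_gap hl (Nat.zero_le (l.length - 1)) (by omega)
  have := sp_getD_pos hx (i := l.length - 1) (by omega)
  omega

lemma head_mem {l : List ℕ} (hne : l ≠ []) : l.getD 0 0 ∈ l :=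
  getD_mem (List.length_pos_iff.mpr hne)

/-! ### The bar-core criterion -/

lemma mem_barLengths {l : List ℕ} {i s : ℕ} :
    s ∈ barLengths l i ↔
      (∃ j, i < j ∧ j < l.length ∧ l.getD i 0 + l.getD j 0 = s) ∨
      (1 ≤ s ∧ s ≤ l.getD i 0 ∧ ∀ j, i < j → j < l.length → l.getD i 0 - l.getD j 0 ≠ s) := by
  simp only [barLengths, Finset.mem_union, Finset.mem_sdiff, Finset.mem_Icc,
    Finset.mem_image, Finset.mem_Ioo]
  constructor
  · rintro (⟨j, ⟨h1, h2⟩, h3⟩ | ⟨⟨h1, h2⟩, h3⟩)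
    · exact Or.inl ⟨j, h1, h2, h3⟩
    · refine Or.inr ⟨h1, h2, fun j hj1 hj2 he => h3 ⟨j, ⟨hj1, hj2⟩, he⟩⟩
  · rintro (⟨j, h1, h2, h3⟩ | ⟨h1, h2, h3⟩)
    · exact Or.inl ⟨j, ⟨h1, h2⟩, h3⟩
    · exact Or.inr ⟨⟨h1, h2⟩, by rintro ⟨j, ⟨hj1, hj2⟩, he⟩; exact h3 j hj1 hj2 he⟩

theorem isBarCore_iff {l : List ℕ} (hl : IsStrictPartition l) {s : ℕ} (hs : 0 < s) :
    IsBarCore l s ↔ (s ∉ l ∧ (∀ x ∈ l, s < x → x - s ∈ l) ∧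
      ∀ x ∈ l, ∀ y ∈ l, y < x → x + y ≠ s) := by
  obtain ⟨hsort, hpos⟩ := hl
  constructor
  · intro h
    refine ⟨?_, ?_, ?_⟩
    · intro hsl
      obtain ⟨i, hi, hgd⟩ := (mem_iff_getD hpos).mp hsl
      refine h i hi (mem_barLengths.mpr (Or.inr ⟨hs, by omega, ?_⟩))
      intro j hj1 hj2
      have := sp_getD_pos hpos hj2
      have := sp_getD_lt hsort hj1 hj2
      omega
    · intro x hxl hsx
      obtain ⟨i, hi, rfl⟩ := (mem_iff_getD hpos).mp hxl
      have hbar := h i hi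
      rw [mem_barLengths] at hbar
      push_neg at hbar
      obtain ⟨j, hj1, hj2, hj3⟩ := hbar.2 hs (by omega)
      have hlt := sp_getD_lt hsort hj1 hj2
      have : l.getD j 0 = l.getD i 0 - s := by omega
      have hmem := getD_mem hj2
      rwa [this] at hmem
    · intro x hxl y hyl hyx hxy
      obtain ⟨i, hi, rfl⟩ := (mem_iff_getD hpos).mp hxl
      obtain ⟨j, hj1, hj2, rfl⟩ := (smaller_parts hsort hpos hi).mpr ⟨hyl, hyx⟩
      exact h i hi (mem_barLengths.mpr (Or.inl ⟨j, hj1, hj2, hxy⟩))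
  · rintro ⟨h1, h2, h3⟩ i hi hmem
    rcases mem_barLengths.mp hmem with ⟨j, hj1, hj2, hj3⟩ | ⟨hc1, hc2, hc3⟩
    · exact h3 _ (getD_mem hi) _ (getD_mem hj2) (sp_getD_lt hsort hj1 hj2) hj3
    · have hx := getD_mem hi
      rcases eq_or_lt_of_le hc2 with he | hlt
      · exact h1 (he ▸ hx)
      · have hms : l.getD i 0 - s ∈ l := h2 _ hx hlt
        have hlt2 : l.getD i 0 - s < l.getD i 0 := by omega
        obtain ⟨j, hj1, hj2, hj3⟩ := (smaller_parts hsort hpos hi).mpr ⟨hms, hlt2⟩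
        exact hc3 j hj1 hj2 (by omega)

end BCaux
namespace BCaux

/-! ### The abacus criterion for s-cores -/

/-- first-column hook lengths -/
def beta (m : List ℕ) (i : ℕ) : ℕ := m.getD i 0 + (m.length - 1 - i)

/-- the beta-set -/
def betaSet (m : List ℕ) : Finset ℕ := (Finset.range m.length).image (beta m)

section Abacus

variable {m : List ℕ}
  (hmono : ∀ i j, i ≤ j → j < m.length → m.getD j 0 ≤ m.getD i 0)
  (hpos : ∀ i, i < m.length → 0 < m.getD i 0)

include hmono in
lemma beta_lt_beta {i j : ℕ} (hij : i < j) (hj : j < m.length) :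
    beta m j < beta m i := by
  have h1 := hmono i j (le_of_lt hij) hj
  unfold beta; omega

include hmono in
lemma beta_le_beta {i j : ℕ} (hij : i ≤ j) (hj : j < m.length) :
    beta m j ≤ beta m i := by
  rcases eq_or_lt_of_le hij with rfl | h
  · exact le_rfl
  · exact (beta_lt_beta hmono h hj).le

/-- the complementary column statistic -/
def cfun (m : List ℕ) (i j : ℕ) : ℕ :=
  j + ((Finset.Ioo i m.length).filter fun i' => m.getD i' 0 ≤ j).card

lemma hook_add_cfun {i j : ℕ} (hi : i < m.length) (hj : j < m.getD i 0) :
    hookLen m i j + cfun m i j = beta m i := by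
  unfold hookLen cfun beta
  have hcard := Finset.card_filter_add_card_filter_not
    (s := Finset.Ioo i m.length) (p := fun i' => j < m.getD i' 0)
  simp only [Nat.not_lt] at hcard
  have hIoo : (Finset.Ioo i m.length).card = m.length - 1 - i := by
    rw [Nat.card_Ioo]; omega
  omega

lemma cfun_lt_beta {i j : ℕ} (hi : i < m.length) (hj : j < m.getD i 0) :
    cfun m i j < beta m i := by
  unfold cfun beta
  have h1 : ((Finset.Ioo i m.length).filter fun i' => m.getD i' 0 ≤ j).card
      ≤ (Finset.Ioo i m.length).card := Finset.card_filter_le _ _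
  have hIoo : (Finset.Ioo i m.length).card = m.length - 1 - i := by
    rw [Nat.card_Ioo]; omega
  omega

include hmono in
lemma cfun_not_mem {i j : ℕ} (hi : i < m.length) (hj : j < m.getD i 0) :
    cfun m i j ∉ betaSet m := by
  intro hmem
  obtain ⟨k, hk, hbk⟩ := Finset.mem_image.mp hmem
  rw [Finset.mem_range] at hk
  rcases le_or_gt k i with hki | hik
  · have h1 := beta_le_beta hmono hki hi
    have h2 := cfun_lt_beta hi hj
    omega
  · rcases le_or_gt (m.getD k 0) j with hmk | hmk
    · -- m_k ≤ j : many small columns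
      have hsub : Finset.Icc k (m.length - 1) ⊆
          (Finset.Ioo i m.length).filter fun i' => m.getD i' 0 ≤ j := by
        intro i' hi'
        rw [Finset.mem_Icc] at hi'
        rw [Finset.mem_filter, Finset.mem_Ioo]
        exact ⟨⟨by omega, by omega⟩, le_trans (hmono k i' hi'.1 (by omega)) hmk⟩
      have hcard := Finset.card_le_card hsub
      rw [Nat.card_Icc] at hcard
      have : cfun m i j = j +
          ((Finset.Ioo i m.length).filter fun i' => m.getD i' 0 ≤ j).card := rfl
      unfold beta at hbk
      omega
    · -- j < m_k : few small columns
      have hsub : ((Finset.Ioo i m.length).filter fun i' => m.getD i' 0 ≤ j) ⊆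
          Finset.Ioo k m.length := by
        intro i' hi'
        rw [Finset.mem_filter, Finset.mem_Ioo] at hi'
        rw [Finset.mem_Ioo]
        refine ⟨?_, hi'.1.2⟩
        by_contra hc
        have := hmono i' k (by omega) hk
        omega
      have hcard := Finset.card_le_card hsub
      rw [Nat.card_Ioo] at hcard
      have : cfun m i j = j +
          ((Finset.Ioo i m.length).filter fun i' => m.getD i' 0 ≤ j).card := rfl
      unfold beta at hbk
      omega

lemma cfun_strictMonoOn {i j1 j2 : ℕ} (h12 : j1 < j2) :
    cfun m i j1 < cfun m i j2 := by
  unfold cfun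
  have hsub : ((Finset.Ioo i m.length).filter fun i' => m.getD i' 0 ≤ j1) ⊆
      ((Finset.Ioo i m.length).filter fun i' => m.getD i' 0 ≤ j2) := by
    intro x hx
    rw [Finset.mem_filter] at hx ⊢
    exact ⟨hx.1, by omega⟩
  have := Finset.card_le_card hsub
  omega

include hmono hpos in
lemma card_sdiff_eq {i : ℕ} (hi : i < m.length) :
    (Finset.range (beta m i) \ betaSet m).card = m.getD i 0 := by
  have hinter : Finset.range (beta m i) ∩ betaSet m
      = (Finset.Ioo i m.length).image (beta m) := by
    ext z
    simp only [Finset.mem_inter, Finset.mem_range, betaSet, Finset.mem_image,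
      Finset.mem_Ioo]
    constructor
    · rintro ⟨hz, k, hk, rfl⟩
      refine ⟨k, ⟨?_, hk⟩, rfl⟩
      by_contra hc
      exact absurd (beta_le_beta hmono (i := k) (j := i) (by omega) hi) (by omega)
    · rintro ⟨k, ⟨h1, h2⟩, rfl⟩
      exact ⟨beta_lt_beta hmono h1 h2, ⟨k, h2, rfl⟩⟩
  have hinj : Set.InjOn (beta m) (Finset.Ioo i m.length) := by
    intro a ha b hb hab
    rw [Finset.mem_coe, Finset.mem_Ioo] at ha hb
    by_contra hne
    rcases Nat.lt_or_ge a b with h | h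
    · exact absurd hab (by have := beta_lt_beta hmono h hb.2; omega)
    · have : b < a := by omega
      exact absurd hab (by have := beta_lt_beta hmono this ha.2; omega)
  have hcard : (Finset.range (beta m i) ∩ betaSet m).card = m.length - 1 - i := by
    rw [hinter, Finset.card_image_of_injOn hinj, Nat.card_Ioo]
    omega
  have h3 := Finset.card_inter_add_card_sdiff (Finset.range (beta m i)) (betaSet m)
  rw [Finset.card_range, hcard] at h3
  unfold beta at h3 ⊢
  omega

include hmono hpos in
lemma cfun_surj {i : ℕ} (hi : i < m.length) {c : ℕ} (hc : c < beta m i)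
    (hcB : c ∉ betaSet m) : ∃ j, j < m.getD i 0 ∧ cfun m i j = c := by
  have himg : (Finset.range (m.getD i 0)).image (cfun m i)
      = Finset.range (beta m i) \ betaSet m := by
    apply Finset.eq_of_subset_of_card_le
    · intro z hz
      obtain ⟨j, hj, rfl⟩ := Finset.mem_image.mp hz
      rw [Finset.mem_range] at hj
      rw [Finset.mem_sdiff, Finset.mem_range]
      exact ⟨cfun_lt_beta hi hj, cfun_not_mem hmono hi hj⟩
    · rw [card_sdiff_eq hmono hpos hi, Finset.card_image_of_injOn, Finset.card_range]
      intro a _ b _ hab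
      by_contra hne
      rcases Nat.lt_or_ge a b with h | h
      · exact absurd hab (Nat.ne_of_lt (cfun_strictMonoOn h))
      · exact absurd hab.symm (Nat.ne_of_lt (cfun_strictMonoOn (by omega)))
  have : c ∈ (Finset.range (m.getD i 0)).image (cfun m i) := by
    rw [himg, Finset.mem_sdiff, Finset.mem_range]
    exact ⟨hc, hcB⟩
  obtain ⟨j, hj, hcj⟩ := Finset.mem_image.mp this
  exact ⟨j, Finset.mem_range.mp hj, hcj⟩

lemma closure_iter {s : ℕ} (hcl : ∀ b ∈ betaSet m, s ≤ b → b - s ∈ betaSet m)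
    (d : ℕ) : ∀ b ∈ betaSet m, d * s ≤ b → b - d * s ∈ betaSet m := by
  induction d with
  | zero => intro b hb _; simpa using hb
  | succ d ih =>
    intro b hb hd
    have h1 : b - d * s ∈ betaSet m := ih b hb (by nlinarith)
    have h2 : s ≤ b - d * s := by
      have : (d + 1) * s = d * s + s := by ring
      omega
    have := hcl _ h1 h2
    have he : b - d * s - s = b - (d + 1) * s := by
      have : (d + 1) * s = d * s + s := by ring
      omega
    rwa [he] at this

include hmono hpos in
theorem isCore_iff_closure {s : ℕ} (hs : 0 < s) :
    IsCore m s ↔ ∀ b ∈ betaSet m, s ≤ b → b - s ∈ betaSet m := by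
  constructor
  · intro hcore b hb hsb
    obtain ⟨i, hi, rfl⟩ := Finset.mem_image.mp hb
    rw [Finset.mem_range] at hi
    by_contra hnb
    have hlt : beta m i - s < beta m i := by
      have : 0 < beta m i := by unfold beta; have := hpos i hi; omega
      omega
    obtain ⟨j, hj, hcj⟩ := cfun_surj hmono hpos hi hlt hnb
    have hhk := hook_add_cfun hi hj
    refine hcore i j hi hj ⟨1, ?_⟩
    omega
  · intro hcl i j hi hj hdvd
    have hhk := hook_add_cfun hi hj
    have hpos' : 0 < hookLen m i j := by
      unfold hookLen; omega
    obtain ⟨d, hd⟩ := hdvd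
    rw [mul_comm] at hd
    have hbi : beta m i ∈ betaSet m :=
      Finset.mem_image.mpr ⟨i, Finset.mem_range.mpr hi, rfl⟩
    have hle : d * s ≤ beta m i := by omega
    have := closure_iter hcl d _ hbi (by omega)
    have heq : beta m i - d * s = cfun m i j := by omega
    rw [heq] at this
    exact cfun_not_mem hmono hi hj this

end Abacus

end BCaux
namespace BCaux

/-! ### Structure of the doubled distinct partition -/

/-- number of `k < l.length` with `v ≤ l_k + k` -/
def cnt (l : List ℕ) (v : ℕ) : ℕ :=
  ((Finset.range l.length).filter fun k => v ≤ l.getD k 0 + k).card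

lemma dd_length (l : List ℕ) : (doubledDistinct l).length = l.getD 0 0 := by
  simp [doubledDistinct]

lemma dd_getD {l : List ℕ} {i : ℕ} (hi : i < l.getD 0 0) :
    (doubledDistinct l).getD i 0 = ddPart l i := by
  have h : i < (doubledDistinct l).length := by rwa [dd_length]
  rw [getD_eq_get h]
  simp [doubledDistinct]

lemma ddPart_lt {l : List ℕ} {i : ℕ} (hi : i < l.length) :
    ddPart l i = l.getD i 0 + i + 1 := if_pos hi

lemma ddPart_ge {l : List ℕ} {i : ℕ} (hi : l.length ≤ i) :
    ddPart l i = cnt l (i + 1) := if_neg (by omega)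

/-- a downward-closed finset of naturals is an initial segment -/
lemma downclosed_eq_range {F : Finset ℕ} (h : ∀ a b, a ≤ b → b ∈ F → a ∈ F) :
    F = Finset.range F.card := by
  have key : ∀ k, k ∈ F ↔ k < F.card := by
    intro k
    constructor
    · intro hk
      have hsub : Finset.range (k + 1) ⊆ F := by
        intro a ha
        rw [Finset.mem_range] at ha
        exact h a k (by omega) hk
      have := Finset.card_le_card hsub
      rw [Finset.card_range] at this
      omega
    · intro hk
      by_contra hkF
      have hsub : F ⊆ Finset.range k := by
        intro x hx
        rw [Finset.mem_range]
        by_contra hc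
        exact hkF (h k x (by omega) hx)
      have := Finset.card_le_card hsub
      rw [Finset.card_range] at this
      omega
  ext k
  rw [Finset.mem_range]
  exact key k

section DD

variable {l : List ℕ} (hsort : List.Pairwise (· > ·) l) (hpos : ∀ x ∈ l, 0 < x)

include hsort in
lemma diag_mono {k k' : ℕ} (hkk' : k ≤ k') (hk' : k' < l.length) :
    l.getD k' 0 + k' ≤ l.getD k 0 + k := by
  have := sp_gap hsort hkk' hk'
  omega

include hsort in
lemma cnt_filter_eq (v : ℕ) :
    ((Finset.range l.length).filter fun k => v ≤ l.getD k 0 + k)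
      = Finset.range (cnt l v) := by
  exact downclosed_eq_range (by
    intro a b hab hb
    rw [Finset.mem_filter, Finset.mem_range] at hb ⊢
    exact ⟨by omega, le_trans hb.2 (diag_mono hsort hab hb.1)⟩)

include hsort in
lemma mem_cnt_iff {v k : ℕ} (hk : k < l.length) :
    v ≤ l.getD k 0 + k ↔ k < cnt l v := by
  have := cnt_filter_eq hsort (l := l) v
  constructor
  · intro h
    have : k ∈ Finset.range (cnt l v) := by
      rw [← this, Finset.mem_filter, Finset.mem_range]
      exact ⟨hk, h⟩
    rwa [Finset.mem_range] at this
  · intro h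
    have : k ∈ (Finset.range l.length).filter fun k => v ≤ l.getD k 0 + k := by
      rw [this, Finset.mem_range]; exact h
    rw [Finset.mem_filter] at this
    exact this.2

lemma cnt_le (l : List ℕ) (v : ℕ) : cnt l v ≤ l.length := by
  have := Finset.card_filter_le (Finset.range l.length)
    (fun k => v ≤ l.getD k 0 + k)
  rwa [Finset.card_range] at this

lemma cnt_pos {l : List ℕ} (hne : l ≠ []) {v : ℕ} (hv : v ≤ l.getD 0 0) :
    0 < cnt l v := by
  have h0 : 0 < l.length := List.length_pos_iff.mpr hne
  apply Finset.card_pos.mpr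
  exact ⟨0, by rw [Finset.mem_filter, Finset.mem_range]; exact ⟨h0, by omega⟩⟩

lemma cnt_anti (l : List ℕ) {v v' : ℕ} (h : v ≤ v') : cnt l v' ≤ cnt l v := by
  apply Finset.card_le_card
  intro x hx
  rw [Finset.mem_filter] at hx ⊢
  exact ⟨hx.1, by omega⟩

include hsort hpos in
lemma dd_mono : ∀ i j, i ≤ j → j < (doubledDistinct l).length →
    (doubledDistinct l).getD j 0 ≤ (doubledDistinct l).getD i 0 := by
  have hstep : ∀ i, i + 1 < (doubledDistinct l).length →
      (doubledDistinct l).getD (i+1) 0 ≤ (doubledDistinct l).getD i 0 := by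
    intro i hi1
    rw [dd_length] at hi1
    rw [dd_getD (i := i + 1) hi1, dd_getD (i := i) (by omega)]
    rcases Nat.lt_or_ge (i+1) l.length with h | h
    · rw [ddPart_lt h, ddPart_lt (i := i) (by omega)]
      have := sp_getD_lt hsort (i := i) (j := i + 1) (by omega) h
      omega
    · rcases Nat.lt_or_ge i l.length with h2 | h2
      · rw [ddPart_lt h2, ddPart_ge h]
        have := cnt_le l (i + 1 + 1)
        have := sp_getD_pos hpos h2
        omega
      · rw [ddPart_ge h, ddPart_ge h2]
        exact cnt_anti l (by omega)
  intro i j hij hj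
  obtain ⟨d, rfl⟩ := Nat.exists_eq_add_of_le hij
  induction d with
  | zero => simp
  | succ d ih =>
    have he : i + (d + 1) = i + d + 1 := by omega
    rw [he]
    have h1 := hstep (i + d) (by rw [← he]; omega)
    have h2 := ih (by omega) (by omega)
    omega

include hsort hpos in
lemma dd_pos : ∀ i, i < (doubledDistinct l).length → 0 < (doubledDistinct l).getD i 0 := by
  intro i hi
  rw [dd_length] at hi
  rw [dd_getD hi]
  rcases Nat.lt_or_ge i l.length with h | h
  · rw [ddPart_lt h]; omega
  · rw [ddPart_ge h]
    have hne : l ≠ [] := by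
      intro he; rw [he] at hi; simp at hi
    apply cnt_pos hne
    have := len_le_head hsort hpos hne
    omega

end DD

end BCaux
namespace BCaux

section BetaDD

variable {l : List ℕ} (hsort : List.Pairwise (· > ·) l) (hpos : ∀ x ∈ l, 0 < x)
  (hne : l ≠ [])

include hsort hpos hne in
theorem betaSet_dd {z : ℕ} :
    z ∈ betaSet (doubledDistinct l) ↔
      (l.getD 0 0 < z ∧ z - l.getD 0 0 ∈ l) ∨
      (z < l.getD 0 0 ∧ l.getD 0 0 - z ∉ l) := by
  set L := l.getD 0 0 with hL
  have hlen : 0 < l.length := List.length_pos_iff.mpr hne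
  have hLl : l.length ≤ L := len_le_head hsort hpos hne
  have hbeta : ∀ i, i < L → beta (doubledDistinct l) i = ddPart l i + (L - 1 - i) := by
    intro i hi
    unfold beta
    rw [dd_getD hi, dd_length]
  constructor
  · intro hz
    obtain ⟨i, hi, rfl⟩ := Finset.mem_image.mp hz
    rw [Finset.mem_range, dd_length] at hi
    rw [hbeta i hi]
    rcases Nat.lt_or_ge i l.length with h | h
    · -- row of the Frobenius arm: value l[i] + L
      rw [ddPart_lt h]
      have h1 : l.getD i 0 + i + 1 + (L - 1 - i) = l.getD i 0 + L := by omega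
      rw [h1]
      have h2 : 0 < l.getD i 0 := sp_getD_pos hpos h
      refine Or.inl ⟨by omega, ?_⟩
      have h3 : l.getD i 0 + L - L = l.getD i 0 := by omega
      rw [h3]
      exact getD_mem h
    · -- leg rows
      rw [ddPart_ge h]
      set c := cnt l (i + 1) with hc
      have hcle : c ≤ l.length := cnt_le l _
      have hzlt : c + (L - 1 - i) < L := by omega
      refine Or.inr ⟨hzlt, ?_⟩
      set y := L - (c + (L - 1 - i)) with hy
      have hyv : y = i + 1 - c := by omega
      intro hyl
      obtain ⟨j, hj, hjy⟩ := (mem_iff_getD hpos).mp hyl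
      rcases Nat.lt_or_ge j c with hjc | hjc
      · have := (mem_cnt_iff hsort hj (v := i + 1)).mpr hjc
        omega
      · have := fun hh => ((mem_cnt_iff hsort hj (v := i + 1)).mp hh)
        have h2 : ¬ (i + 1 ≤ l.getD j 0 + j) := fun hh => by have := this hh; omega
        omega
  · rintro (⟨h1, h2⟩ | ⟨h1, h2⟩)
    · -- z = L + x with x ∈ l
      obtain ⟨i, hi, hgd⟩ := (mem_iff_getD hpos).mp h2
      refine Finset.mem_image.mpr ⟨i, Finset.mem_range.mpr (by rw [dd_length]; omega), ?_⟩
      rw [hbeta i (by omega), ddPart_lt hi]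
      omega
    · -- z < L, y := L - z not a part
      set y := L - z with hy
      have hy1 : 1 ≤ y := by omega
      have hyL : y ≤ L := by omega
      set c' := ((Finset.range l.length).filter fun k => y < l.getD k 0).card with hc'
      -- the filter is an initial segment
      have hfil : ((Finset.range l.length).filter fun k => y < l.getD k 0)
          = Finset.range c' := by
        apply downclosed_eq_range
        intro a b hab hb
        rw [Finset.mem_filter, Finset.mem_range] at hb ⊢
        exact ⟨by omega, lt_of_lt_of_le hb.2 (sp_getD_le hsort hab hb.1)⟩
      have hmemc' : ∀ k, k < l.length → (y < l.getD k 0 ↔ k < c') := by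
        intro k hk
        constructor
        · intro hyk
          have : k ∈ Finset.range c' := by
            rw [← hfil, Finset.mem_filter, Finset.mem_range]
            exact ⟨hk, hyk⟩
          rwa [Finset.mem_range] at this
        · intro hk'
          have : k ∈ (Finset.range l.length).filter fun k => y < l.getD k 0 := by
            rw [hfil, Finset.mem_range]; exact hk'
          rw [Finset.mem_filter] at this
          exact this.2
      have hc'len : c' ≤ l.length := by
        have := Finset.card_filter_le (Finset.range l.length) (fun k => y < l.getD k 0)
        rwa [Finset.card_range] at this
      -- (α) : l.length < y + c'
      have halpha : l.length < y + c' := by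
        have hcardsmall : ((Finset.range l.length).filter fun k => ¬ y < l.getD k 0).card
            ≤ (Finset.Ico 1 y).card := by
          apply Finset.card_le_card_of_injOn (fun k => l.getD k 0)
          · intro k hk
            rw [Finset.mem_coe, Finset.mem_filter, Finset.mem_range] at hk
            simp only [Finset.mem_coe, Finset.mem_Ico]
            have hpk := sp_getD_pos hpos hk.1
            have hne2 : l.getD k 0 ≠ y := fun he => h2 (he ▸ getD_mem hk.1)
            constructor
            · omega
            · have : l.getD k 0 ≤ y := by omega
              omega
          · intro a ha b hb hab
            rw [Finset.mem_coe, Finset.mem_filter, Finset.mem_range] at ha hb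
            by_contra hne2
            rcases Nat.lt_or_ge a b with hab2 | hab2
            · exact absurd hab (Nat.ne_of_gt (sp_getD_lt hsort hab2 hb.1))
            · exact absurd hab (Nat.ne_of_lt (sp_getD_lt hsort (by omega) ha.1))
        have hsplit := Finset.card_filter_add_card_filter_not
          (s := Finset.range l.length) (p := fun k => y < l.getD k 0)
        rw [Finset.card_range] at hsplit
        rw [Nat.card_Ico] at hcardsmall
        omega
      -- (β) : y + c' ≤ L
      have hbeta2 : y + c' ≤ L := by
        have : c' ≤ L - y := by
          have hcb : ((Finset.range l.length).filter fun k => y < l.getD k 0).card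
              ≤ (Finset.Icc (y+1) L).card := by
            apply Finset.card_le_card_of_injOn (fun k => l.getD k 0)
            · intro k hk
              rw [Finset.mem_coe, Finset.mem_filter, Finset.mem_range] at hk
              simp only [Finset.mem_coe, Finset.mem_Icc]
              exact ⟨by omega, by rw [hL]; exact sp_getD_le hsort (Nat.zero_le k) hk.1⟩
            · intro a ha b hb hab
              rw [Finset.mem_coe, Finset.mem_filter, Finset.mem_range] at ha hb
              by_contra hne2
              rcases Nat.lt_or_ge a b with hab2 | hab2
              · exact absurd hab (Nat.ne_of_gt (sp_getD_lt hsort hab2 hb.1))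
              · exact absurd hab (Nat.ne_of_lt (sp_getD_lt hsort (by omega) ha.1))
          rw [Nat.card_Icc] at hcb
          omega
        omega
      set i := y + c' - 1 with hi
      have hiL : i < L := by omega
      have hil : l.length ≤ i := by omega
      -- (γ) : cnt l (i+1) = c'
      have hgamma : cnt l (i + 1) = c' := by
        have hieq : i + 1 = y + c' := by omega
        have hmem : ∀ k, k < l.length → (i + 1 ≤ l.getD k 0 + k ↔ k < c') := by
          intro k hk
          rw [hieq]
          constructor
          · intro hyk
            by_contra hkc
            push_neg at hkc
            -- k ≥ c' : l[k] ≤ y - 1 - (k - c')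
            have hc'lt : c' < l.length := by omega
            have hyc' : ¬ y < l.getD c' 0 := fun hh => by
              have := (hmemc' c' hc'lt).mp hh; omega
            have hnear : l.getD c' 0 ≠ y := fun he => h2 (he ▸ getD_mem hc'lt)
            have hgap := sp_gap hsort (i := c') (j := k) (by omega) hk
            omega
          · intro hkc
            have hkc'' : k < c' := hkc
            have hc'pos : 0 < c' := by omega
            have hgap := sp_gap hsort (i := k) (j := c' - 1) (by omega) (by omega)
            have hylt := (hmemc' (c' - 1) (by omega)).mpr (by omega)
            omega
        unfold cnt
        have hfe : ((Finset.range l.length).filter fun k => i + 1 ≤ l.getD k 0 + k)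
            = Finset.range c' := by
          ext k
          rw [Finset.mem_filter, Finset.mem_range, Finset.mem_range]
          constructor
          · rintro ⟨hk, hx⟩
            exact (hmem k hk).mp hx
          · intro hk
            exact ⟨by omega, (hmem k (by omega)).mpr hk⟩
        rw [hfe, Finset.card_range]
      refine Finset.mem_image.mpr ⟨i, Finset.mem_range.mpr (by rw [dd_length]; omega), ?_⟩
      rw [hbeta i hiL, ddPart_ge hil, hgamma]
      omega

end BetaDD

end BCaux
namespace BCaux

/-- The part-set criterion for the bar-core property. -/
def BarCrit (s : ℕ) (l : List ℕ) : Prop :=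
  s ∉ l ∧ (∀ x ∈ l, s < x → x - s ∈ l) ∧ ∀ x ∈ l, ∀ y ∈ l, y < x → x + y ≠ s

section CoreDD

variable {l : List ℕ} (hsort : List.Pairwise (· > ·) l) (hpos : ∀ x ∈ l, 0 < x)

include hsort hpos in
theorem isCore_dd_iff {t : ℕ} (ht : 0 < t) :
    IsCore (doubledDistinct l) (2 * t) ↔
      BarCrit (2 * t) l ∧ ∀ x ∈ l, x % (2 * t) ≠ t := by
  rcases eq_or_ne l [] with rfl | hne
  · constructor
    · intro _
      refine ⟨⟨by simp, by simp, by simp⟩, by simp⟩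
    · intro _ i j hi hj
      rw [dd_length] at hi
      simp at hi
  · set s := 2 * t with hs
    set L := l.getD 0 0 with hLdef
    have hlen : 0 < l.length := List.length_pos_iff.mpr hne
    have hLl : l.length ≤ L := len_le_head hsort hpos hne
    have hLmem : L ∈ l := head_mem hne
    have hLpos : 0 < L := hpos _ hLmem
    have hle : ∀ x ∈ l, x ≤ L := fun x hx => le_head hsort hx
    rw [isCore_iff_closure (dd_mono hsort hpos) (dd_pos hsort hpos) (by omega)]
    have hZ : ∀ z, z ∈ betaSet (doubledDistinct l) ↔
        ((L < z ∧ z - L ∈ l) ∨ (z < L ∧ L - z ∉ l)) := fun z =>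
      betaSet_dd hsort hpos hne
    constructor
    · intro hclos
      have hclos' : ∀ z, ((L < z ∧ z - L ∈ l) ∨ (z < L ∧ L - z ∉ l)) → s ≤ z →
          ((L < z - s ∧ z - s - L ∈ l) ∨ (z - s < L ∧ L - (z - s) ∉ l)) := by
        intro z h1 h2
        exact (hZ _).mp (hclos z ((hZ z).mpr h1) h2)
      -- s ∉ l
      have hsnl : s ∉ l := by
        intro hsl
        have h := hclos' (L + s) (Or.inl ⟨by omega, by
          have : L + s - L = s := by omega
          rw [this]; exact hsl⟩) (by omega)
        rcases h with ⟨h1, _⟩ | ⟨h1, _⟩ <;> omega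
      -- closure
      have hcl : ∀ x ∈ l, s < x → x - s ∈ l := by
        intro x hx hsx
        have h := hclos' (L + x) (Or.inl ⟨by omega, by
          have : L + x - L = x := by omega
          rw [this]; exact hx⟩) (by have := hle x hx; omega)
        rcases h with ⟨h1, h2⟩ | ⟨h1, h2⟩
        · have : L + x - s - L = x - s := by omega
          rwa [this] at h2
        · omega
      -- no two parts sum to s
      have hpair : ∀ x ∈ l, ∀ y ∈ l, y < x → x + y ≠ s := by
        intro x hx y hy hyx hxy
        have hxL := hle x hx
        have hyL := hle y hy
        have hy1 := hpos y hy
        have h := hclos' (L + x) (Or.inl ⟨by omega, by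
          have : L + x - L = x := by omega
          rw [this]; exact hx⟩) (by omega)
        rcases h with ⟨h1, h2⟩ | ⟨h1, h2⟩
        · omega
        · have : L - (L + x - s) = y := by omega
          rw [this] at h2
          exact h2 hy
      -- t is not a part
      have htnl : t ∉ l := by
        intro htl
        have htL := hle t htl
        have h := hclos' (L + t) (Or.inl ⟨by omega, by
          have : L + t - L = t := by omega
          rw [this]; exact htl⟩) (by omega)
        rcases h with ⟨h1, h2⟩ | ⟨h1, h2⟩
        · omega
        · have : L - (L + t - s) = t := by omega
          rw [this] at h2
          exact h2 htl
      refine ⟨⟨hsnl, hcl, hpair⟩, ?_⟩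
      intro x
      induction x using Nat.strong_induction_on with
      | _ x ih =>
        intro hx hmod
        rcases lt_trichotomy x s with h | h | h
        · have : x % s = x := Nat.mod_eq_of_lt h
          rw [this] at hmod
          exact htnl (hmod ▸ hx)
        · exact hsnl (h ▸ hx)
        · have hxs := hcl x hx h
          have hm2 : (x - s) % s = t := by
            rw [← Nat.mod_eq_sub_mod (le_of_lt h)]
            exact hmod
          exact ih (x - s) (by omega) hxs hm2
    · rintro ⟨⟨hsnl, hcl, hpair⟩, htf⟩
      intro z hz hsz
      rw [hZ] at hz
      rw [hZ]
      rcases hz with ⟨h1, h2⟩ | ⟨h1, h2⟩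
      · set x := z - L with hx
        have hxl : x ∈ l := h2
        have hx1 := hpos x hxl
        have hxL := hle x hxl
        rcases lt_trichotomy x s with hc | hc | hc
        · -- x < s : go to the complement side
          refine Or.inr ⟨by omega, ?_⟩
          have he : L - (z - s) = s - x := by omega
          rw [he]
          intro hwl
          rcases lt_trichotomy (s - x) x with hw | hw | hw
          · exact hpair x hxl (s - x) hwl hw (by omega)
          · have hxt : x = t := by omega
            exact htf x hxl (by rw [hxt]; exact Nat.mod_eq_of_lt (by omega))
          · exact hpair (s - x) hwl x hxl hw (by omega)
        · exact absurd (hc ▸ hxl) hsnl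
        · refine Or.inl ⟨by omega, ?_⟩
          have he : z - s - L = x - s := by omega
          rw [he]
          exact hcl x hxl hc
      · set y := L - z with hy
        have hy1 : 1 ≤ y := by omega
        refine Or.inr ⟨by omega, ?_⟩
        have he : L - (z - s) = y + s := by omega
        rw [he]
        intro hwl
        have := hcl (y + s) hwl (by omega)
        have he2 : y + s - s = y := by omega
        rw [he2] at this
        exact h2 this

end CoreDD

end BCaux
namespace BCaux

lemma list_sum_getD (l : List ℕ) : l.sum = ∑ i ∈ Finset.range l.length, l.getD i 0 := by
  induction l with
  | nil => simp
  | cons a l ih =>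
    rw [List.sum_cons, List.length_cons, Finset.sum_range_succ']
    simp only [List.getD_cons_succ, List.getD_cons_zero]
    rw [← ih]
    omega

lemma map_range_sum (n : ℕ) (f : ℕ → ℕ) :
    ((List.range n).map f).sum = ∑ i ∈ Finset.range n, f i := by
  induction n with
  | zero => simp
  | succ n ih =>
    rw [List.range_succ, List.map_append, List.sum_append, Finset.sum_range_succ, ih]
    simp

section DDSum

variable {l : List ℕ} (hsort : List.Pairwise (· > ·) l) (hpos : ∀ x ∈ l, 0 < x)

include hsort hpos in
theorem dd_sum : (doubledDistinct l).sum = 2 * l.sum := by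
  rcases eq_or_ne l [] with rfl | hne
  · simp [doubledDistinct]
  · set L := l.getD 0 0 with hLdef
    set ll := l.length with hll
    have hlen : 0 < ll := List.length_pos_iff.mpr hne
    have hLl : ll ≤ L := len_le_head hsort hpos hne
    have hdiagL : ∀ k, k < ll → l.getD k 0 + k ≤ L := by
      intro k hk
      have := diag_mono hsort (Nat.zero_le k) hk
      omega
    have hdiagl : ∀ k, k < ll → ll ≤ l.getD k 0 + k := by
      intro k hk
      have h1 := sp_gap hsort (i := k) (j := ll - 1) (by omega) (by omega)
      have h2 := sp_getD_pos hpos (i := ll - 1) (by omega)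
      omega
    rw [doubledDistinct, map_range_sum]
    rw [Finset.range_eq_Ico, ← Finset.sum_Ico_consecutive _ (Nat.zero_le ll) hLl]
    have hfirst : ∑ i ∈ Finset.Ico 0 ll, ddPart l i
        = l.sum + (∑ i ∈ Finset.range ll, i) + ll := by
      rw [← Finset.range_eq_Ico]
      have : ∀ i ∈ Finset.range ll, ddPart l i = l.getD i 0 + i + 1 := by
        intro i hi
        rw [Finset.mem_range] at hi
        exact ddPart_lt hi
      rw [Finset.sum_congr rfl this]
      rw [Finset.sum_add_distrib, Finset.sum_add_distrib, Finset.sum_const,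
        Finset.card_range, list_sum_getD]
      simp [mul_comm, hll]
    have hsecond : ∑ i ∈ Finset.Ico ll L, ddPart l i
        = ∑ k ∈ Finset.range ll, (l.getD k 0 + k - ll) := by
      have h1 : ∀ i ∈ Finset.Ico ll L, ddPart l i
          = ∑ k ∈ Finset.range ll, if i + 1 ≤ l.getD k 0 + k then 1 else 0 := by
        intro i hi
        rw [Finset.mem_Ico] at hi
        rw [ddPart_ge hi.1, cnt, Finset.card_filter]
      rw [Finset.sum_congr rfl h1, Finset.sum_comm]
      apply Finset.sum_congr rfl
      intro k hk
      rw [Finset.mem_range] at hk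
      have h2 : ((Finset.Ico ll L).filter fun i => i + 1 ≤ l.getD k 0 + k)
          = Finset.Ico ll (l.getD k 0 + k) := by
        ext i
        rw [Finset.mem_filter, Finset.mem_Ico, Finset.mem_Ico]
        have := hdiagL k hk
        omega
      rw [← Finset.card_filter, h2, Nat.card_Ico]
    rw [hfirst, hsecond]
    have hsub : (∑ k ∈ Finset.range ll, (l.getD k 0 + k - ll)) + ll * ll
        = l.sum + ∑ i ∈ Finset.range ll, i := by
      have h4 : ∑ k ∈ Finset.range ll, ((l.getD k 0 + k - ll) + ll)
          = ∑ k ∈ Finset.range ll, (l.getD k 0 + k) := by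
        apply Finset.sum_congr rfl
        intro k hk
        rw [Finset.mem_range] at hk
        have := hdiagl k hk
        omega
      rw [Finset.sum_add_distrib, Finset.sum_const, Finset.card_range,
        smul_eq_mul] at h4
      rw [Finset.sum_add_distrib] at h4
      rw [list_sum_getD, ← hll]
      omega
    have hgauss := Finset.sum_range_id_mul_two ll
    have hsq : ll * (ll - 1) + ll = ll * ll := by
      obtain ⟨p, hp⟩ : ∃ p, ll = p + 1 := ⟨ll - 1, by omega⟩
      rw [hp]
      simp only [Nat.add_sub_cancel]
      ring
    omega

end DDSum

end BCaux
namespace BCaux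

open scoped Classical

/-- Finset version of the bar-core criterion. -/
def BarF (s : ℕ) (S : Finset ℕ) : Prop :=
  s ∉ S ∧ (∀ x ∈ S, s < x → x - s ∈ S) ∧ ∀ x ∈ S, ∀ y ∈ S, y < x → x + y ≠ s

/-- no element congruent to `t` mod `s` -/
def TF (s t : ℕ) (S : Finset ℕ) : Prop := ∀ x ∈ S, x % s ≠ t

/-- the staircase `t, 3t, 5t, …, (2i-1)t` -/
def stair (t i : ℕ) : Finset ℕ := (Finset.range i).image (fun k => 2*k*t + t)

section Stair

variable {t : ℕ} (ht : 0 < t)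

lemma mem_stair {i x : ℕ} : x ∈ stair t i ↔ ∃ k, k < i ∧ x = 2*k*t + t := by
  unfold stair
  simp only [Finset.mem_image, Finset.mem_range]
  constructor
  · rintro ⟨k, h1, rfl⟩; exact ⟨k, h1, rfl⟩
  · rintro ⟨k, h1, rfl⟩; exact ⟨k, h1, rfl⟩

include ht in
lemma stair_inj {a b : ℕ} (h : 2*a*t + t = 2*b*t + t) : a = b := by
  have h2 : a * (2*t) = b * (2*t) := by
    have ha : 2*a*t = a*(2*t) := by ring
    have hb : 2*b*t = b*(2*t) := by ring
    omega
  exact Nat.eq_of_mul_eq_mul_right (by omega) h2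

include ht in
lemma stair_card (i : ℕ) : (stair t i).card = i := by
  unfold stair
  rw [Finset.card_image_of_injOn, Finset.card_range]
  intro a _ b _ hab
  exact stair_inj ht hab

include ht in
lemma stair_sum (i : ℕ) : (stair t i).sum id = t * i^2 := by
  unfold stair
  rw [Finset.sum_image (by intro a _ b _ hab; exact stair_inj ht hab)]
  have hgauss := Finset.sum_range_id_mul_two i
  have hsum : ∑ k ∈ Finset.range i, id (2*k*t + t)
      = (∑ k ∈ Finset.range i, k) * (2*t) + i * t := by
    simp only [id]
    have hterm : ∀ k ∈ Finset.range i, 2*k*t + t = k*(2*t) + t := by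
      intro k _; ring
    rw [Finset.sum_congr rfl hterm, Finset.sum_add_distrib, Finset.sum_const,
      Finset.card_range, ← Finset.sum_mul, smul_eq_mul]
  rw [hsum]
  have hsqi : i * (i - 1) + i = i * i := by
    rcases Nat.eq_zero_or_pos i with rfl | hi
    · simp
    · obtain ⟨p, hp⟩ : ∃ p, i = p + 1 := ⟨i - 1, by omega⟩
      rw [hp]
      simp only [Nat.add_sub_cancel]
      ring
  calc (∑ k ∈ Finset.range i, k) * (2*t) + i * t
      = ((∑ k ∈ Finset.range i, k) * 2) * t + i * t := by ring
    _ = (i * (i-1)) * t + i * t := by rw [hgauss]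
    _ = (i * (i-1) + i) * t := by ring
    _ = (i * i) * t := by rw [hsqi]
    _ = t * i^2 := by rw [sq]; ring

lemma stair_mod {i x : ℕ} (hx : x ∈ stair t i) (ht : 0 < t) : x % (2*t) = t := by
  obtain ⟨k, _, rfl⟩ := mem_stair.mp hx
  have h1 : 2*k*t + t = t + k*(2*t) := by ring
  rw [h1, Nat.add_mul_mod_self_right]
  exact Nat.mod_eq_of_lt (by omega)

include ht in
lemma stair_pos {i x : ℕ} (hx : x ∈ stair t i) : 0 < x := by
  obtain ⟨k, _, rfl⟩ := mem_stair.mp hx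
  omega

/-- In a bar-core part set, the parts `≡ t (mod 2t)` form a staircase. -/
lemma filter_eq_stair {S : Finset ℕ} (hb : BarF (2*t) S) (ht : 0 < t) :
    S.filter (fun x => x % (2*t) = t)
      = stair t ((S.filter (fun x => x % (2*t) = t)).card) := by
  set T := S.filter (fun x => x % (2*t) = t) with hT
  have hmodT : ∀ x ∈ T, x % (2*t) = t := fun x hx => (Finset.mem_filter.mp hx).2
  have hclosT : ∀ x ∈ T, 2*t < x → x - 2*t ∈ T := by
    intro x hx h2
    rw [hT, Finset.mem_filter] at hx ⊢
    refine ⟨hb.2.1 x hx.1 h2, ?_⟩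
    rw [← Nat.mod_eq_sub_mod (le_of_lt h2)]
    exact hx.2
  have hdown : ∀ q, ∀ x ∈ T, x = 2*q*t + t → ∀ j, j ≤ q → 2*j*t + t ∈ T := by
    intro q
    induction q with
    | zero =>
      intro x hx hxe j hj
      obtain rfl : j = 0 := by omega
      exact hxe ▸ hx
    | succ q ih =>
      intro x hx hxe j hj
      have hgt : 2*t < x := by nlinarith
      have hx' : x - 2*t ∈ T := hclosT x hx hgt
      have hxe' : x - 2*t = 2*q*t + t := by
        have h3 : 2*(q+1)*t = 2*q*t + 2*t := by ring
        omega
      rcases Nat.lt_or_ge j (q+1) with hc | hc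
      · exact ih _ hx' hxe' j (by omega)
      · obtain rfl : j = q + 1 := by omega
        exact hxe ▸ hx
  rcases T.eq_empty_or_nonempty with he | hne
  · rw [he]
    simp [stair]
  · obtain ⟨m, hmT, hmax⟩ : ∃ m ∈ T, ∀ x ∈ T, x ≤ m :=
      ⟨T.max' hne, T.max'_mem hne, fun x hx => T.le_max' x hx⟩
    obtain ⟨q, hmq⟩ : ∃ q, m = 2*q*t + t := by
      refine ⟨m / (2*t), ?_⟩
      have h1 := Nat.div_add_mod m (2*t)
      have h2 := hmodT m hmT
      have h3 : 2*t*(m/(2*t)) = 2*(m/(2*t))*t := by ring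
      omega
    have hTe : T = stair t (q+1) := by
      ext x
      rw [mem_stair]
      constructor
      · intro hx
        obtain ⟨k, hxk⟩ : ∃ k, x = 2*k*t + t := by
          refine ⟨x / (2*t), ?_⟩
          have h1 := Nat.div_add_mod x (2*t)
          have h2 := hmodT x hx
          have h3 : 2*t*(x/(2*t)) = 2*(x/(2*t))*t := by ring
          omega
        refine ⟨k, ?_, hxk⟩
        have hxm : x ≤ m := hmax x hx
        by_contra hc
        push_neg at hc
        have h5 : 2*(q+1) ≤ 2*k := by omega
        have h6 := Nat.mul_le_mul_right t h5
        have h7 : 2*(q+1)*t = 2*q*t + 2*t := by ring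
        omega
      · rintro ⟨k, hk, rfl⟩
        exact hdown q m hmT hmq k (by omega)
    rw [hTe, stair_card ht]

end Stair

end BCaux
namespace BCaux

instance decBarF (s : ℕ) (S : Finset ℕ) : Decidable (BarF s S) := by
  unfold BarF; infer_instance

instance decTF (s t : ℕ) (S : Finset ℕ) : Decidable (TF s t S) := by
  unfold TF; infer_instance

section Count

variable {t : ℕ}

lemma barF_sdiff (ht : 0 < t) {S : Finset ℕ} (hb : BarF (2*t) S) :
    BarF (2*t) (S \ S.filter (fun x => x % (2*t) = t)) ∧
    TF (2*t) t (S \ S.filter (fun x => x % (2*t) = t)) := by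
  refine ⟨⟨?_, ?_, ?_⟩, ?_⟩
  · intro h; exact hb.1 (Finset.mem_sdiff.mp h).1
  · intro x hx hsx
    rw [Finset.mem_sdiff] at hx ⊢
    have h1 : x - 2*t ∈ S := hb.2.1 x hx.1 hsx
    refine ⟨h1, ?_⟩
    intro hmem
    have h2 : (x - 2*t) % (2*t) = t := (Finset.mem_filter.mp hmem).2
    have h3 : x % (2*t) = t := by rw [Nat.mod_eq_sub_mod hsx.le]; exact h2
    exact hx.2 (Finset.mem_filter.mpr ⟨hx.1, h3⟩)
  · intro x hx y hy
    exact hb.2.2 x (Finset.mem_sdiff.mp hx).1 y (Finset.mem_sdiff.mp hy).1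
  · intro x hx hmod
    rw [Finset.mem_sdiff] at hx
    exact hx.2 (Finset.mem_filter.mpr ⟨hx.1, hmod⟩)

lemma barF_union (ht : 0 < t) {S : Finset ℕ} (hb : BarF (2*t) S)
    (htf : TF (2*t) t S) (i : ℕ) : BarF (2*t) (S ∪ stair t i) := by
  refine ⟨?_, ?_, ?_⟩
  · intro h
    rcases Finset.mem_union.mp h with h | h
    · exact hb.1 h
    · obtain ⟨k, hk, hke⟩ := mem_stair.mp h
      rcases Nat.eq_zero_or_pos k with rfl | hkp
      · have h0 : 2*0*t + t = t := by ring
        omega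
      · have h6 := Nat.mul_le_mul_right t (show 2*1 ≤ 2*k by omega)
        have h7 : 2*1*t = 2*t := by ring
        omega
  · intro x hx hsx
    rcases Finset.mem_union.mp hx with h | h
    · exact Finset.mem_union_left _ (hb.2.1 x h hsx)
    · obtain ⟨k, hk, rfl⟩ := mem_stair.mp h
      rcases Nat.eq_zero_or_pos k with rfl | hkp
      · exfalso
        have h0 : 2*0*t + t = t := by ring
        omega
      · apply Finset.mem_union_right
        rw [mem_stair]
        refine ⟨k-1, by omega, ?_⟩
        obtain ⟨p, rfl⟩ : ∃ p, k = p + 1 := ⟨k - 1, by omega⟩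
        have h7 : 2*(p+1)*t = 2*p*t + 2*t := by ring
        simp only [Nat.add_sub_cancel]
        omega
  · intro x hx y hy hyx hxy
    rcases Finset.mem_union.mp hx with hxS | hxT
    · rcases Finset.mem_union.mp hy with hyS | hyT
      · exact hb.2.2 x hxS y hyS hyx hxy
      · obtain ⟨j, hj, rfl⟩ := mem_stair.mp hyT
        rcases Nat.eq_zero_or_pos j with rfl | hjp
        · -- y = t, so x = t = y, contradicting y < x
          have h0 : 2*0*t + t = t := by ring
          omega
        · have h6 := Nat.mul_le_mul_right t (show 2*1 ≤ 2*j by omega)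
          have h7 : 2*1*t = 2*t := by ring
          omega
    · obtain ⟨k, hk, rfl⟩ := mem_stair.mp hxT
      rcases Nat.eq_zero_or_pos k with rfl | hkp
      · -- x = t, x + y = 2t gives y = t = x, contradicting y < x
        have h0 : 2*0*t + t = t := by ring
        omega
      · have h6 := Nat.mul_le_mul_right t (show 2*1 ≤ 2*k by omega)
        have h7 : 2*1*t = 2*t := by ring
        omega

lemma mem_powerset_of {n : ℕ} {S : Finset ℕ} (hsum : S.sum id ≤ n) :
    S ∈ (Finset.range (n+1)).powerset := by
  rw [Finset.mem_powerset]
  intro x hx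
  rw [Finset.mem_range]
  have h1 := Finset.single_le_sum (f := (id : ℕ → ℕ)) (fun i _ => Nat.zero_le _) hx
  have h2 : id x = x := rfl
  have h3 : (∑ x ∈ S, id x) = S.sum id := rfl
  omega

lemma card_le_sum {S : Finset ℕ} (h0 : 0 ∉ S) : S.card ≤ S.sum id := by
  rw [Finset.card_eq_sum_ones]
  apply Finset.sum_le_sum
  intro x hx
  have : x ≠ 0 := fun he => h0 (he ▸ hx)
  simp only [id]
  omega

lemma ncard_eq_card (n : ℕ) (P : Finset ℕ → Prop) [DecidablePred P]
    (hP : ∀ S, P S → S ∈ (Finset.range (n+1)).powerset) :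
    {S : Finset ℕ | P S}.ncard = ((Finset.range (n+1)).powerset.filter P).card := by
  rw [← Set.ncard_coe_finset]
  congr 1
  ext S
  simp only [Finset.coe_filter, Set.mem_setOf_eq]
  exact ⟨fun h => ⟨hP S h, h⟩, fun h => h.2⟩

theorem count_main (ht : 0 < t) (n : ℕ) :
    {S : Finset ℕ | 0 ∉ S ∧ (S.sum id = n ∧ BarF (2*t) S)}.ncard
      = ∑ i ∈ Finset.range (n + 1),
          if i ^ 2 * (2*t) ≤ 2 * n then
            {S : Finset ℕ | 0 ∉ S ∧ (2 * S.sum id = 2*n - i^2*(2*t) ∧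
              BarF (2*t) S ∧ TF (2*t) t S)}.ncard
          else 0 := by
  have heqq : ∀ i : ℕ, i^2*(2*t) = 2*(t*i^2) := by intro i; ring
  rw [ncard_eq_card n _ (fun S hS => mem_powerset_of (le_of_eq hS.2.1))]
  rw [Finset.card_eq_sum_card_fiberwise
    (f := fun S : Finset ℕ => (S.filter (fun x => x % (2*t) = t)).card)
    (t := Finset.range (n+1))
    (fun S hS => by
      rw [Finset.mem_coe, Finset.mem_filter] at hS
      show (S.filter (fun x => x % (2*t) = t)).card ∈ Finset.range (n+1)
      rw [Finset.mem_range]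
      have h1 := Finset.card_filter_le S (fun x => x % (2*t) = t)
      have h2 := card_le_sum hS.2.1
      have h3 := hS.2.2.1
      omega)]
  apply Finset.sum_congr rfl
  intro i _
  by_cases hti : t * i^2 ≤ n
  · rw [if_pos (by have := heqq i; omega)]
    rw [ncard_eq_card n _ (fun S hS => mem_powerset_of (by
      have := hS.2.1
      omega))]
    apply Finset.card_bij' (fun S _ => S \ stair t i) (fun S' _ => S' ∪ stair t i)
    · -- forward map lands in target
      intro S hS
      rw [Finset.mem_filter] at hS
      obtain ⟨hSF, hci⟩ := hS
      have hci' : (S.filter (fun x => x % (2*t) = t)).card = i := hci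
      rw [Finset.mem_filter, Finset.mem_powerset] at hSF
      obtain ⟨hpow, h0, hsum, hb⟩ := hSF
      have hstair : S.filter (fun x => x % (2*t) = t) = stair t i := by
        rw [← hci']
        exact filter_eq_stair hb ht
      have hsub : stair t i ⊆ S := by
        rw [← hstair]; exact Finset.filter_subset _ _
      have hdd := barF_sdiff ht hb
      rw [hstair] at hdd
      have hsdsum : (S \ stair t i).sum id + (stair t i).sum id = S.sum id :=
        Finset.sum_sdiff hsub
      rw [stair_sum ht] at hsdsum
      rw [Finset.mem_filter, Finset.mem_powerset]
      refine ⟨subset_trans (Finset.sdiff_subset) hpow, ?_, ?_, hdd.1, hdd.2⟩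
      · intro h; exact h0 (Finset.mem_sdiff.mp h).1
      · have := heqq i; omega
    · -- backward map lands in source
      intro S' hS'
      rw [Finset.mem_filter, Finset.mem_powerset] at hS'
      obtain ⟨hpow, h0, hsum, hb, htf⟩ := hS'
      have hdisj : Disjoint S' (stair t i) := by
        rw [Finset.disjoint_left]
        intro x hx hxs
        exact htf x hx (stair_mod hxs ht)
      have hssum : S'.sum id = n - t*i^2 := by have := heqq i; omega
      rw [Finset.mem_filter, Finset.mem_filter, Finset.mem_powerset]
      have hstairsub : stair t i ⊆ Finset.range (n+1) := by
        intro x hx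
        obtain ⟨k, hk, rfl⟩ := mem_stair.mp hx
        rw [Finset.mem_range]
        have h1 : 2*k*t + t = (2*k+1)*t := by ring
        have h2 : 2*k+1 ≤ i*i := by nlinarith
        have h3 := Nat.mul_le_mul_right t h2
        have h4 : t * i^2 = i*i*t := by ring
        omega
      have hfilu : (S' ∪ stair t i).filter (fun x => x % (2*t) = t) = stair t i := by
        ext x
        rw [Finset.mem_filter, Finset.mem_union]
        constructor
        · rintro ⟨hx | hx, hmod⟩
          · exact absurd hmod (htf x hx)
          · exact hx
        · intro hx
          exact ⟨Or.inr hx, stair_mod hx ht⟩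
      refine ⟨⟨?_, ?_, ?_, barF_union ht hb htf i⟩, ?_⟩
      · exact Finset.union_subset hpow hstairsub
      · intro h
        rcases Finset.mem_union.mp h with h | h
        · exact h0 h
        · exact absurd (stair_pos ht h) (by omega)
      · rw [Finset.sum_union hdisj, stair_sum ht]
        have he : (∑ x ∈ S', id x) = S'.sum id := rfl
        omega
      · rw [hfilu, stair_card ht]
    · -- left inverse
      intro S hS
      rw [Finset.mem_filter] at hS
      obtain ⟨hSF, hci⟩ := hS
      have hci' : (S.filter (fun x => x % (2*t) = t)).card = i := hci
      rw [Finset.mem_filter] at hSF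
      have hb := hSF.2.2.2
      have hstair : S.filter (fun x => x % (2*t) = t) = stair t i := by
        rw [← hci']
        exact filter_eq_stair hb ht
      have hsub : stair t i ⊆ S := by
        rw [← hstair]; exact Finset.filter_subset _ _
      exact Finset.sdiff_union_of_subset hsub
    · -- right inverse
      intro S' hS'
      rw [Finset.mem_filter] at hS'
      have htf := hS'.2.2.2.2
      have hdisj : Disjoint S' (stair t i) := by
        rw [Finset.disjoint_left]
        intro x hx hxs
        exact htf x hx (stair_mod hxs ht)
      rw [Finset.union_sdiff_right]
      exact Finset.sdiff_eq_self_of_disjoint hdisj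
  · rw [if_neg (by have := heqq i; omega)]
    rw [Finset.card_eq_zero]
    rw [Finset.eq_empty_iff_forall_notMem]
    intro S hS
    rw [Finset.mem_filter] at hS
    obtain ⟨hSF, hci⟩ := hS
    have hci' : (S.filter (fun x => x % (2*t) = t)).card = i := hci
    rw [Finset.mem_filter] at hSF
    obtain ⟨hpow, h0, hsum, hb⟩ := hSF
    have hstair : S.filter (fun x => x % (2*t) = t) = stair t i := by
      rw [← hci']
      exact filter_eq_stair hb ht
    have hsub : stair t i ⊆ S := by
      rw [← hstair]; exact Finset.filter_subset _ _
    have hle : (stair t i).sum id ≤ S.sum id :=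
      Finset.sum_le_sum_of_subset hsub
    rw [stair_sum ht] at hle
    omega

end Count

end BCaux
namespace BCaux

lemma barCrit_iff_barF {s : ℕ} {l : List ℕ} :
    BarCrit s l ↔ BarF s l.toFinset := by
  unfold BarCrit BarF
  simp only [List.mem_toFinset]

lemma sum_toFinset_eq {l : List ℕ} (hl : List.Pairwise (· > ·) l) :
    l.toFinset.sum id = l.sum := by
  have hnodup : l.Nodup := hl.imp (fun h => ne_of_gt h)
  rw [List.sum_toFinset _ hnodup, List.map_id]

lemma ncard_transfer (Q : List ℕ → Prop) (Q' : Finset ℕ → Prop)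
    (hQ : ∀ l : List ℕ, IsStrictPartition l → (Q l ↔ Q' l.toFinset)) :
    {l : List ℕ | IsStrictPartition l ∧ Q l}.ncard
      = {S : Finset ℕ | 0 ∉ S ∧ Q' S}.ncard := by
  haveI : IsAntisymm ℕ (· > ·) := ⟨fun a b h1 h2 => absurd h2 (lt_asymm h1)⟩
  have himg : (fun l : List ℕ => l.toFinset) '' {l | IsStrictPartition l ∧ Q l}
      = {S | 0 ∉ S ∧ Q' S} := by
    ext S
    constructor
    · rintro ⟨l, ⟨⟨hsort, hpos⟩, hq⟩, rfl⟩
      refine ⟨fun h0 => ?_, (hQ l ⟨hsort, hpos⟩).mp hq⟩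
      have := hpos 0 (List.mem_toFinset.mp h0)
      omega
    · rintro ⟨h0, hq⟩
      have hts : ((S.sort (·≤·)).reverse).toFinset = S := by
        rw [List.toFinset_reverse, Finset.sort_toFinset]
      have hsorted : List.Pairwise (· > ·) (S.sort (·≤·)).reverse := by
        have h1 := List.sortedLT_iff_pairwise.mp (Finset.sortedLT_sort S)
        exact List.pairwise_reverse.mpr (by simpa using h1)
      have hposl : ∀ x ∈ (S.sort (·≤·)).reverse, 0 < x := by
        intro x hx
        rw [List.mem_reverse, Finset.mem_sort] at hx
        have : x ≠ 0 := fun he => h0 (he ▸ hx)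
        omega
      exact ⟨(S.sort (·≤·)).reverse, ⟨⟨hsorted, hposl⟩,
        (hQ _ ⟨hsorted, hposl⟩).mpr (by rw [hts]; exact hq)⟩, hts⟩
  rw [← himg]
  refine (Set.ncard_image_of_injOn ?_).symm
  intro l1 h1 l2 h2 he
  have hn1 : l1.Nodup := h1.1.1.imp (fun h => ne_of_gt h)
  have hn2 : l2.Nodup := h2.1.1.imp (fun h => ne_of_gt h)
  exact List.Perm.eq_of_pairwise' h1.1.1 h2.1.1
    (List.perm_of_nodup_nodup_toFinset_eq hn1 hn2 he)

end BCaux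


/-- For an even positive integer `s` and every `n`,
`bc_s(n) = Σ_{i ≥ 0, i²s ≤ 2n} dd_s(2n − i²s)`, where `bc_s(n)` counts `s̄`-core strict
partitions of size `n` and `dd_s(m)` counts doubled distinct `s`-cores of size `m`
(partitions of the form `λλ`, of size `2|λ|`, with no hook length divisible by `s`). -/
theorem bc_eq_sum_dd (s : ℕ) (hs : 0 < s) (hse : Even s) (n : ℕ) :
    {l : List ℕ | IsStrictPartition l ∧ l.sum = n ∧ IsBarCore l s}.ncard =
      ∑ i ∈ Finset.range (n + 1),
        if i ^ 2 * s ≤ 2 * n then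
          {l : List ℕ | IsStrictPartition l ∧ (doubledDistinct l).sum = 2 * n - i ^ 2 * s ∧
            IsCore (doubledDistinct l) s}.ncard
        else 0 := by
  obtain ⟨t, rfl⟩ : ∃ t, s = 2 * t := by
    obtain ⟨a, ha⟩ := hse
    exact ⟨a, by omega⟩
  have ht : 0 < t := by omega
  have hL := BCaux.ncard_transfer (fun l => l.sum = n ∧ IsBarCore l (2*t))
    (fun S => S.sum id = n ∧ BCaux.BarF (2*t) S) (by
      intro l hl
      constructor
      · rintro ⟨h1, h2⟩
        refine ⟨by rw [BCaux.sum_toFinset_eq hl.1]; exact h1, ?_⟩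
        exact BCaux.barCrit_iff_barF.mp ((BCaux.isBarCore_iff hl hs).mp h2)
      · rintro ⟨h1, h2⟩
        refine ⟨by rw [← BCaux.sum_toFinset_eq hl.1]; exact h1, ?_⟩
        exact (BCaux.isBarCore_iff hl hs).mpr (BCaux.barCrit_iff_barF.mpr h2))
  rw [hL, BCaux.count_main ht n]
  apply Finset.sum_congr rfl
  intro i _
  by_cases hcond : i^2*(2*t) ≤ 2*n
  · rw [if_pos hcond, if_pos hcond]
    refine (BCaux.ncard_transfer _ _ ?_).symm
    intro l hl
    have hsum : (doubledDistinct l).sum = 2 * (l.toFinset.sum id) := by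
      rw [BCaux.dd_sum hl.1 hl.2, BCaux.sum_toFinset_eq hl.1]
    have hcore := BCaux.isCore_dd_iff hl.1 hl.2 ht
    have htfe : (∀ x ∈ l, x % (2*t) ≠ t) ↔ BCaux.TF (2*t) t l.toFinset := by
      unfold BCaux.TF
      simp only [List.mem_toFinset]
    constructor
    · rintro ⟨h1, h2⟩
      obtain ⟨hb, htf⟩ := hcore.mp h2
      exact ⟨by rw [← hsum]; exact h1,
        BCaux.barCrit_iff_barF.mp hb, htfe.mp htf⟩
    · rintro ⟨h1, h2, h3⟩
      exact ⟨by rw [hsum]; exact h1,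
        hcore.mpr ⟨BCaux.barCrit_iff_barF.mpr h2, htfe.mpr h3⟩⟩
  · rw [if_neg hcond, if_neg hcond]
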